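/- arXiv:1601.02263 — 2 statements merged into one kernel-verified Lean document; each statement's English description precedes it below -/
import Mathlib

section
/- Let A_s(μ,z), B_s(μ,z) denote the normalized solution (A_0=1, A_s(0)=0 for s≥1) of the Olver recursion with parameter μ, and define a_0(z)=1, a_{s+1}(z) = A_{s+1}(−μ,z) + (2μ/z)B_s(−μ,z), and b_s(z) = B_s(−μ,z). Then the pair (a_s, b_s) satisfies the Olver recursion with parameter μ (with a_0 = 1). -/
/-- A pair of sequences of analytic functions `A_s`, `B_s` on `D` satisfying
Olver's recursion with parameter `μ` attached to the function `f`: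
`A_0 = 1`, `2B_s(z) = -A_s'(z) + ∫_0^z (f(t)A_s(t) - ((2μ+1)/t)A_s'(t)) dt`
(encoded by its differentiated form on `D \ {0}` together with the value at
`z = 0`), and `2A_{s+1}(z) = ((2μ+1)/z)B_s(z) - B_s'(z) + P(z)` where `P` is
some (arbitrary) analytic antiderivative of `f·B_s` on `D`. -/
structure OlverSolution (D : Set ℂ) (f : ℂ → ℂ) (μ : ℂ) (A B : ℕ → ℂ → ℂ) : Prop where
  analA : ∀ s, AnalyticOnNhd ℂ (A s) D
  analB : ∀ s, AnalyticOnNhd ℂ (B s) D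
  A_zero : ∀ z, A 0 z = 1
  recB : ∀ s, ∀ z ∈ D, z ≠ 0 →
    2 * deriv (B s) z =
      -(deriv (deriv (A s)) z) + f z * A s z - ((2 * μ + 1) / z) * deriv (A s) z
  recB₀ : ∀ s, 2 * B s 0 = -(deriv (A s) 0)
  recA : ∀ s, ∃ P : ℂ → ℂ, AnalyticOnNhd ℂ P D ∧
    (∀ z ∈ D, deriv P z = f z * B s z) ∧
    ∀ z ∈ D, z ≠ 0 →
      2 * A (s + 1) z = ((2 * μ + 1) / z) * B s z - deriv (B s) z + P z

/-! Because `f` is even, induction along the recursion shows that each `A_s(-μ, ·)` is even and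
each `B_s(-μ, ·)` is odd. Hence `B_s(-μ, 0) = 0`, so `g_s(z) = B_s(-μ, z) / z` is analytic (and
even), and `a_{s+1} = A_{s+1}(-μ, ·) + 2μ g_s`. Writing `B_s = z g_s` removes the singularity from
the `A`-recursion: `2A_{s+1}(-μ, ·) = -2μ g_s - z g_s' + P`. Differentiating this identity is exactly
what is needed to turn the `B`-recursion for parameter `-μ` into the one for parameter `μ`, while
the `A`-recursion for `a_{s+1}` holds with the same antiderivative `P`, the term `(2μ/z) B_s`
absorbing the change of the coefficient `(1 - 2μ)/z` into `(1 + 2μ)/z`. -/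

open Filter Topology Set

def EvenOn {α β : Type*} [Neg α] (g : α → β) (D : Set α) : Prop :=
  ∀ z ∈ D, g (-z) = g z

def OddOn {α β : Type*} [Neg α] [Neg β] (g : α → β) (D : Set α) : Prop :=
  ∀ z ∈ D, g (-z) = -g z

theorem OddOn.map_zero {α β : Type*} [NegZeroClass α] [AddCommGroup β] [IsAddTorsionFree β]
    {g : α → β} {D : Set α} (hg : OddOn g D) (h0 : 0 ∈ D) : g 0 = 0 := by
  simpa [neg_eq_self] using (hg 0 h0).symm

section Calculus

variable {𝕜 G : Type*} [RCLike 𝕜] [NormedAddCommGroup G] [NormedSpace 𝕜 G] {g : 𝕜 → G}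
  {D : Set 𝕜}

theorem EvenOn.oddOn_deriv (hg : EvenOn g D) (hD : IsOpen D) : OddOn (deriv g) D := by
  intro z hz
  have h : (fun w => g (-w)) =ᶠ[𝓝 z] g := eventuallyEq_of_mem (hD.mem_nhds hz) hg
  rw [← h.deriv_eq, deriv_comp_neg, neg_neg]

theorem OddOn.evenOn_deriv (hg : OddOn g D) (hD : IsOpen D) : EvenOn (deriv g) D := by
  intro z hz
  have h : (fun w => g (-w)) =ᶠ[𝓝 z] fun w => -g w := eventuallyEq_of_mem (hD.mem_nhds hz) hg
  have h' := h.deriv_eq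
  rw [deriv_comp_neg, deriv.fun_neg] at h'
  exact neg_inj.1 h'

theorem oddOn_of_evenOn_deriv (hDo : IsOpen D) (hDp : IsPreconnected D)
    (hDn : ∀ z ∈ D, -z ∈ D) (hD0 : 0 ∈ D) (hg : DifferentiableOn 𝕜 g D)
    (hg' : EvenOn (deriv g) D) (hg0 : g 0 = 0) : OddOn g D := by
  have hrefl : DifferentiableOn 𝕜 (fun z => -g (-z)) D :=
    (hg.comp (differentiableOn_neg D) hDn).neg
  have heq : EqOn g (fun z => -g (-z)) D := by
    refine hDo.eqOn_of_deriv_eq hDp hg hrefl (fun z hz => ?_) hD0 (by simp [hg0])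
    rw [deriv.fun_neg, deriv_comp_neg, neg_neg, hg' z hz]
  intro z hz
  simpa using heq (hDn z hz)

theorem evenOn_of_oddOn_deriv (hDo : IsOpen D) (hDp : IsPreconnected D)
    (hDn : ∀ z ∈ D, -z ∈ D) (hD0 : 0 ∈ D) (hg : DifferentiableOn 𝕜 g D)
    (hg' : OddOn (deriv g) D) : EvenOn g D := by
  have hrefl : DifferentiableOn 𝕜 (fun z => g (-z)) D := hg.comp (differentiableOn_neg D) hDn
  have heq : EqOn g (fun z => g (-z)) D := by
    refine hDo.eqOn_of_deriv_eq hDp hg hrefl (fun z hz => ?_) hD0 (by simp)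
    rw [deriv_comp_neg, hg' z hz, neg_neg]
  exact fun z hz => (heq hz).symm

end Calculus

section DSlope

variable {𝕜 : Type*} [NontriviallyNormedField 𝕜] {g : 𝕜 → 𝕜}

theorem mul_dslope_zero (hg0 : g 0 = 0) (z : 𝕜) : z * dslope g 0 z = g z := by
  simpa [hg0] using sub_smul_dslope g 0 z

theorem dslope_zero_eq_div (hg0 : g 0 = 0) {z : 𝕜} (hz0 : z ≠ 0) : dslope g 0 z = g z / z :=
  eq_div_of_mul_eq hz0 (by rw [mul_comm, mul_dslope_zero hg0])

theorem OddOn.evenOn_dslope_zero {D : Set 𝕜} (hg : OddOn g D) (hg0 : g 0 = 0) :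
    EvenOn (dslope g 0) D := by
  intro z hz
  rcases eq_or_ne z 0 with rfl | hz0
  · rw [neg_zero]
  rw [dslope_zero_eq_div hg0 (neg_ne_zero.2 hz0), dslope_zero_eq_div hg0 hz0, hg z hz,
    neg_div_neg_eq]

end DSlope

theorem AnalyticOnNhd.dslope_of_isOpen {g : ℂ → ℂ} {D : Set ℂ} {c : ℂ}
    (hg : AnalyticOnNhd ℂ g D) (hDo : IsOpen D) (hc : c ∈ D) : AnalyticOnNhd ℂ (dslope g c) D :=
  (Complex.analyticOnNhd_iff_differentiableOn hDo).2
    ((Complex.differentiableOn_dslope (hDo.mem_nhds hc)).2 hg.differentiableOn)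

namespace OlverSolution

variable {D : Set ℂ} {f : ℂ → ℂ} {μ : ℂ} {A B : ℕ → ℂ → ℂ}

theorem oddOn_of_evenOn (h : OlverSolution D f μ A B) (hDo : IsOpen D) (hDp : IsPreconnected D)
    (hDn : ∀ z ∈ D, -z ∈ D) (hD0 : 0 ∈ D) (hf : EvenOn f D) {s : ℕ} (hA : EvenOn (A s) D) :
    OddOn (B s) D := by
  have hA' := hA.oddOn_deriv hDo
  have hA'' := hA'.evenOn_deriv hDo
  have hB' : EvenOn (deriv (B s)) D := by
    intro z hz
    rcases eq_or_ne z 0 with rfl | hz0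
    · rw [neg_zero]
    have hneg := h.recB s (-z) (hDn z hz) (neg_ne_zero.2 hz0)
    rw [hA'' z hz, hf z hz, hA z hz, hA' z hz] at hneg
    apply mul_left_cancel₀ (two_ne_zero' ℂ)
    rw [hneg, h.recB s z hz hz0, div_neg, neg_mul_neg]
  refine oddOn_of_evenOn_deriv hDo hDp hDn hD0 (h.analB s).differentiableOn hB' ?_
  have h₀ := h.recB₀ s
  rw [hA'.map_zero hD0, neg_zero] at h₀
  exact (mul_eq_zero.1 h₀).resolve_left two_ne_zero

theorem evenOn_succ_of_oddOn (h : OlverSolution D f μ A B) (hDo : IsOpen D)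
    (hDp : IsPreconnected D) (hDn : ∀ z ∈ D, -z ∈ D) (hD0 : 0 ∈ D) (hf : EvenOn f D) {s : ℕ}
    (hB : OddOn (B s) D) : EvenOn (A (s + 1)) D := by
  obtain ⟨P, hP, hP', hrec⟩ := h.recA s
  have hB' := hB.evenOn_deriv hDo
  have hPe : EvenOn P D := by
    refine evenOn_of_oddOn_deriv hDo hDp hDn hD0 hP.differentiableOn fun z hz => ?_
    rw [hP' z hz, hP' _ (hDn z hz), hf z hz, hB z hz, mul_neg]
  intro z hz
  rcases eq_or_ne z 0 with rfl | hz0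
  · rw [neg_zero]
  have hneg := hrec (-z) (hDn z hz) (neg_ne_zero.2 hz0)
  rw [hB z hz, hB' z hz, hPe z hz] at hneg
  apply mul_left_cancel₀ (two_ne_zero' ℂ)
  rw [hneg, hrec z hz hz0, div_neg, neg_mul_neg]

theorem evenOn_A_and_oddOn_B (h : OlverSolution D f μ A B) (hDo : IsOpen D)
    (hDp : IsPreconnected D) (hDn : ∀ z ∈ D, -z ∈ D) (hD0 : 0 ∈ D) (hf : EvenOn f D) (s : ℕ) :
    EvenOn (A s) D ∧ OddOn (B s) D := by
  have hA : EvenOn (A s) D := by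
    cases s with
    | zero => exact fun z _ => by rw [h.A_zero, h.A_zero]
    | succ s =>
      exact h.evenOn_succ_of_oddOn hDo hDp hDn hD0 hf
        (h.evenOn_A_and_oddOn_B hDo hDp hDn hD0 hf s).2
  exact ⟨hA, h.oddOn_of_evenOn hDo hDp hDn hD0 hf hA⟩

theorem two_mul_deriv_A_succ (h : OlverSolution D f μ A B) (hDo : IsOpen D) (hD0 : 0 ∈ D)
    {s : ℕ} (hB0 : B s 0 = 0) {z : ℂ} (hz : z ∈ D) (hz0 : z ≠ 0) :
    2 * deriv (A (s + 1)) z = (2 * μ - 1) * deriv (dslope (B s) 0) z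
      - z * deriv (deriv (dslope (B s) 0)) z + f z * B s z := by
  set g := dslope (B s) 0
  have hg := (h.analB s).dslope_of_isOpen hDo hD0
  have hBg : B s = fun w => w * g w := funext fun w => (mul_dslope_zero hB0 w).symm
  obtain ⟨P, hP, hP', hrec⟩ := h.recA s
  have hrec' : (fun w => 2 * A (s + 1) w) =ᶠ[𝓝 z]
      fun w => 2 * μ * g w - w * deriv g w + P w := by
    filter_upwards [hDo.mem_nhds hz, eventually_ne_nhds hz0] with w hw hw0
    have hB' : deriv (B s) w = g w + w * deriv g w := by
      rw [hBg, ((hasDerivAt_id' w).fun_mul (hg w hw).differentiableAt.hasDerivAt).deriv,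
        one_mul]
    rw [hrec w hw hw0, hB', hBg]
    field_simp
    ring
  have hderiv := (((hg z hz).differentiableAt.hasDerivAt.const_mul (2 * μ)).sub
    ((hasDerivAt_id' z).fun_mul (hg.deriv z hz).differentiableAt.hasDerivAt)).add
    (hP z hz).differentiableAt.hasDerivAt
  rw [((h.analA (s + 1) z hz).differentiableAt.hasDerivAt.const_mul 2).unique
    (hderiv.congr_of_eventuallyEq hrec'), hP' z hz]
  ring

-- `dslope (B s) 0` is the analytic continuation of `B_s(z) / z` once `B_s(0) = 0`.
noncomputable def flipA (μ : ℂ) (A B : ℕ → ℂ → ℂ) : ℕ → ℂ → ℂ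
  | 0 => fun _ => 1
  | s + 1 => fun z => A (s + 1) z + 2 * μ * dslope (B s) 0 z

theorem evenOn_flipA {s : ℕ} (hA : EvenOn (A (s + 1)) D) (hB : OddOn (B s) D)
    (hB0 : B s 0 = 0) : EvenOn (flipA μ A B (s + 1)) D := fun z hz => by
  simp only [flipA, hA z hz, hB.evenOn_dslope_zero hB0 z hz]

theorem flipA_recB_succ (h : OlverSolution D f (-μ) A B) (hDo : IsOpen D) (hD0 : 0 ∈ D)
    {s : ℕ} (hB0 : B s 0 = 0) {z : ℂ} (hz : z ∈ D) (hz0 : z ≠ 0) :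
    2 * deriv (B (s + 1)) z = -deriv (deriv (flipA μ A B (s + 1))) z
      + f z * flipA μ A B (s + 1) z - ((2 * μ + 1) / z) * deriv (flipA μ A B (s + 1)) z := by
  set g := dslope (B s) 0
  have hg := (h.analB s).dslope_of_isOpen hDo hD0
  have hA := h.analA (s + 1)
  have hflip' : EqOn (deriv (flipA μ A B (s + 1)))
      (fun w => deriv (A (s + 1)) w + 2 * μ * deriv g w) D := fun w hw =>
    ((hA w hw).differentiableAt.hasDerivAt.add
      ((hg w hw).differentiableAt.hasDerivAt.const_mul (2 * μ))).deriv
  have hflip'' : deriv (deriv (flipA μ A B (s + 1))) z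
      = deriv (deriv (A (s + 1))) z + 2 * μ * deriv (deriv g) z := by
    rw [(eventuallyEq_of_mem (hDo.mem_nhds hz) hflip').deriv_eq]
    exact ((hA.deriv z hz).differentiableAt.hasDerivAt.add
      ((hg.deriv z hz).differentiableAt.hasDerivAt.const_mul (2 * μ))).deriv
  have hA' := h.two_mul_deriv_A_succ hDo hD0 hB0 hz hz0
  have hB' := h.recB (s + 1) z hz hz0
  rw [← mul_dslope_zero hB0 z] at hA'
  rw [hflip'', hflip' hz]
  simp only [flipA]
  field_simp at hA' hB' ⊢
  linear_combination hB' + 2 * μ * hA'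

theorem flip (h : OlverSolution D f (-μ) A B) (hDo : IsOpen D) (hDp : IsPreconnected D)
    (hDn : ∀ z ∈ D, -z ∈ D) (hD0 : 0 ∈ D) (hf : EvenOn f D) :
    OlverSolution D f μ (flipA μ A B) B := by
  have hparity := h.evenOn_A_and_oddOn_B hDo hDp hDn hD0 hf
  have hB0 (s : ℕ) : B s 0 = 0 := (hparity s).2.map_zero hD0
  refine ⟨?analA, h.analB, fun _ => rfl, ?recB, ?recB₀, ?recA⟩
  case analA =>
    rintro (_ | s)
    · exact analyticOnNhd_const
    · exact (h.analA (s + 1)).add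
        (analyticOnNhd_const.mul ((h.analB s).dslope_of_isOpen hDo hD0))
  case recB =>
    rintro (_ | s) z hz hz0
    · have h₀ := h.recB 0 z hz hz0
      simp only [show A 0 = fun _ => 1 from funext h.A_zero, deriv_const'] at h₀
      simpa [flipA] using h₀
    · exact h.flipA_recB_succ hDo hD0 (hB0 s) hz hz0
  case recB₀ =>
    rintro (_ | s)
    · simp [flipA, hB0]
    · have heven := evenOn_flipA (μ := μ) (hparity (s + 1)).1 (hparity s).2 (hB0 s)
      rw [hB0, (heven.oddOn_deriv hDo).map_zero hD0]
      ring
  case recA =>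
    intro s
    obtain ⟨P, hP, hP', hrec⟩ := h.recA s
    refine ⟨P, hP, hP', fun z hz hz0 => ?_⟩
    have h₀ := hrec z hz hz0
    simp only [flipA, dslope_zero_eq_div (hB0 s) hz0]
    field_simp at h₀ ⊢
    linear_combination h₀

end OlverSolution

theorem olver_parameter_flip_general (R : ℝ) (hR : 0 < R) (f : ℂ → ℂ) (μ : ℂ)
    (hfe : ∀ z ∈ Metric.ball (0 : ℂ) R, f (-z) = f z)
    (Am Bm : ℕ → ℂ → ℂ)
    (hAB : OlverSolution (Metric.ball 0 R) f (-μ) Am Bm)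
    (a b : ℕ → ℂ → ℂ)
    (ha0 : ∀ z, a 0 z = 1)
    (ha : ∀ s, ∀ z : ℂ, z ≠ 0 → a (s + 1) z = Am (s + 1) z + (2 * μ / z) * Bm s z)
    (haz : ∀ s, a (s + 1) 0 = Am (s + 1) 0 + 2 * μ * deriv (Bm s) 0)
    (hb : ∀ s z, b s z = Bm s z) :
    OlverSolution (Metric.ball 0 R) f μ a b := by
  have hDo : IsOpen (Metric.ball (0 : ℂ) R) := Metric.isOpen_ball
  have hDp : IsPreconnected (Metric.ball (0 : ℂ) R) := (convex_ball 0 R).isPreconnected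
  have hDn : ∀ z ∈ Metric.ball (0 : ℂ) R, -z ∈ Metric.ball (0 : ℂ) R := by simp
  have hD0 : (0 : ℂ) ∈ Metric.ball 0 R := Metric.mem_ball_self hR
  have hB0 (s : ℕ) : Bm s 0 = 0 :=
    (hAB.evenOn_A_and_oddOn_B hDo hDp hDn hD0 hfe s).2.map_zero hD0
  have ha' : a = OlverSolution.flipA μ Am Bm := by
    funext s z
    rcases s with _ | s
    · exact ha0 z
    rcases eq_or_ne z 0 with rfl | hz0
    · simp only [haz, OlverSolution.flipA, dslope_same]
    · simp only [ha s z hz0, OlverSolution.flipA, dslope_zero_eq_div (hB0 s) hz0]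
      ring
  have hb' : b = Bm := funext fun s => funext (hb s)
  rw [ha', hb']
  exact hAB.flip hDo hDp hDn hD0 hfe

/-- Theorem 5.2 (first part) of the paper: if `A_s(-μ,·), B_s(-μ,·)` is the
normalized Olver solution with parameter `-μ`, then
`a_0 = 1`, `a_{s+1}(z) = A_{s+1}(-μ,z) + (2μ/z) B_s(-μ,z)` (with the value at
`z = 0` given by analytic continuation, `a_{s+1}(0) = A_{s+1}(-μ,0) + 2μ B_s'(-μ,0)`)
and `b_s(z) = B_s(-μ,z)` satisfy the Olver recursion with parameter `μ`. -/
theorem olver_parameter_flip (R : ℝ) (hR : 0 < R) (f : ℂ → ℂ) (μ : ℂ)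
    (hf : AnalyticOnNhd ℂ f (Metric.ball 0 R))
    (hfe : ∀ z ∈ Metric.ball (0 : ℂ) R, f (-z) = f z)
    (Am Bm : ℕ → ℂ → ℂ)
    (hAB : OlverSolution (Metric.ball 0 R) f (-μ) Am Bm)
    (hnorm : ∀ s, Am (s + 1) 0 = 0)
    (a b : ℕ → ℂ → ℂ)
    (ha0 : ∀ z, a 0 z = 1)
    (ha : ∀ s, ∀ z : ℂ, z ≠ 0 → a (s + 1) z = Am (s + 1) z + (2 * μ / z) * Bm s z)
    (haz : ∀ s, a (s + 1) 0 = Am (s + 1) 0 + 2 * μ * deriv (Bm s) 0)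
    (hb : ∀ s z, b s z = Bm s z) :
    OlverSolution (Metric.ball 0 R) f μ a b :=
  olver_parameter_flip_general R hR f μ hfe Am Bm hAB a b ha0 ha haz hb
end

section
/- Define the formal power series F(u,μ) = 1 − 2μ Σ_{s≥0} B_s'(μ,0) u^{−(2s+2)} in the variable u^{−1}, where B_s(μ,·) comes from the normalized Olver recursion. Then F(u,μ)·F(u,−μ) = 1 as formal power series; equivalently, B_s'(−μ,0) = B_s'(μ,0) + 2μ Σ_{r=0}^{s−1} B_r'(μ,0) B'_{s−1−r}(−μ,0) for all s ≥ 0. -/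
/-!
If `(A, B)` solves Olver's recursion with parameter `μ` and `f` is even (so that every `B_s` is
odd), then `(A_s - 2μ B_{s-1}/z, B_s)` solves it with parameter `-μ`. A solution is determined
by the values `A_s(0)`, and convolving a solution with scalars `c_j` (`c_0 = 1`) gives another
one, whose values at `0` are the `c_s` when `A` is normalized. With `c_j` the coefficients of
`F(u,μ)` in `u⁻²`, both `-μ`-solutions have the same values at `0`, so
`B_s(μ,·) = ∑_{i+j=s} c_i B_j(-μ,·)`; differentiating at `0` gives the convolution identity.
-/

open Metric Set Filter Finset Topology

section Ball

variable {R : ℝ} {g h : ℂ → ℂ}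

theorem eqOn_ball_of_forall_ne_zero (hg : AnalyticOnNhd ℂ g (ball 0 R))
    (hh : AnalyticOnNhd ℂ h (ball 0 R)) (heq : ∀ z ∈ ball (0 : ℂ) R, z ≠ 0 → g z = h z) :
    EqOn g h (ball 0 R) := by
  intro z hz
  have h0 : (0 : ℂ) ∈ ball (0 : ℂ) R := mem_ball_self (pos_of_mem_ball hz)
  refine hg.eqOn_of_preconnected_of_frequently_eq hh (convex_ball 0 R).isPreconnected h0
    (Eventually.frequently ?_) hz
  filter_upwards [nhdsWithin_le_nhds (isOpen_ball.mem_nhds h0), self_mem_nhdsWithin]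
    with w hw hw0 using heq w hw hw0

theorem eqOn_ball_of_deriv_eq (hg : AnalyticOnNhd ℂ g (ball 0 R))
    (hh : AnalyticOnNhd ℂ h (ball 0 R))
    (hderiv : ∀ z ∈ ball (0 : ℂ) R, z ≠ 0 → deriv g z = deriv h z) (h0 : g 0 = h 0) :
    EqOn g h (ball 0 R) := fun _ hz =>
  isOpen_ball.eqOn_of_deriv_eq (convex_ball 0 R).isPreconnected hg.differentiableOn
    hh.differentiableOn (eqOn_ball_of_forall_ne_zero hg.deriv hh.deriv hderiv)
    (mem_ball_self (pos_of_mem_ball hz)) h0 hz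

theorem neg_mem_ball_zero_of_mem {z : ℂ} (hz : z ∈ ball (0 : ℂ) R) : -z ∈ ball (0 : ℂ) R := by
  simpa using hz

theorem AnalyticOnNhd.comp_neg_ball (hg : AnalyticOnNhd ℂ g (ball 0 R)) :
    AnalyticOnNhd ℂ (fun z => g (-z)) (ball 0 R) :=
  hg.comp analyticOnNhd_id.neg fun _ => neg_mem_ball_zero_of_mem

theorem deriv_neg_of_even (hg : ∀ z ∈ ball (0 : ℂ) R, g (-z) = g z) {z : ℂ}
    (hz : z ∈ ball (0 : ℂ) R) : deriv g (-z) = -deriv g z := by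
  have hloc : (fun w => g (-w)) =ᶠ[𝓝 z] g :=
    eventuallyEq_of_mem (isOpen_ball.mem_nhds hz) hg
  have h := hloc.deriv_eq
  rw [deriv_comp_neg] at h
  linear_combination -h

theorem deriv_neg_of_odd (hg : ∀ z ∈ ball (0 : ℂ) R, g (-z) = -g z) {z : ℂ}
    (hz : z ∈ ball (0 : ℂ) R) : deriv g (-z) = deriv g z := by
  have hloc : (fun w => g (-w)) =ᶠ[𝓝 z] fun w => -g w :=
    eventuallyEq_of_mem (isOpen_ball.mem_nhds hz) hg
  simpa [deriv_comp_neg] using hloc.deriv_eq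

theorem deriv_zero_of_even (hR : 0 < R) (hg : ∀ z ∈ ball (0 : ℂ) R, g (-z) = g z) :
    deriv g 0 = 0 := by
  have h := deriv_neg_of_even hg (mem_ball_self hR)
  rw [neg_zero] at h
  linear_combination h / 2

theorem apply_zero_of_odd (hR : 0 < R) (hg : ∀ z ∈ ball (0 : ℂ) R, g (-z) = -g z) :
    g 0 = 0 := by
  have h := hg 0 (mem_ball_self hR)
  rw [neg_zero] at h
  linear_combination h / 2

end Ball

namespace OlverSolution

variable {R : ℝ} {f : ℂ → ℂ} {ν : ℂ} {A B A' B' : ℕ → ℂ → ℂ}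

theorem odd_B_of_even_A (hfe : ∀ z ∈ ball (0 : ℂ) R, f (-z) = f z)
    (h : OlverSolution (ball 0 R) f ν A B) {s : ℕ}
    (hA : ∀ z ∈ ball (0 : ℂ) R, A s (-z) = A s z) :
    ∀ z ∈ ball (0 : ℂ) R, B s (-z) = -B s z := by
  intro z hz
  have hA' : ∀ w ∈ ball (0 : ℂ) R, deriv (A s) (-w) = -deriv (A s) w :=
    fun w hw => deriv_neg_of_even hA hw
  have hA'' : ∀ w ∈ ball (0 : ℂ) R, deriv (deriv (A s)) (-w) = deriv (deriv (A s)) w :=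
    fun w hw => deriv_neg_of_odd hA' hw
  have hB0 : B s 0 = 0 := by
    have h2B := h.recB₀ s
    rw [deriv_zero_of_even (pos_of_mem_ball hz) hA] at h2B
    linear_combination h2B / 2
  refine eqOn_ball_of_deriv_eq (h.analB s).comp_neg_ball (h.analB s).neg (fun w hw hw0 => ?_)
    (by simp [hB0]) hz
  have hB' := h.recB s (-w) (neg_mem_ball_zero_of_mem hw) (neg_ne_zero.mpr hw0)
  rw [hA'' w hw, hfe w hw, hA w hw, hA' w hw, div_neg] at hB'
  rw [deriv_comp_neg, Pi.neg_def, deriv.fun_neg]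
  linear_combination (h.recB s w hw hw0 - hB') / 2

theorem even_A_succ_of_odd_B (hfe : ∀ z ∈ ball (0 : ℂ) R, f (-z) = f z)
    (h : OlverSolution (ball 0 R) f ν A B) {s : ℕ}
    (hB : ∀ z ∈ ball (0 : ℂ) R, B s (-z) = -B s z) :
    ∀ z ∈ ball (0 : ℂ) R, A (s + 1) (-z) = A (s + 1) z := by
  obtain ⟨P, hPan, hP', hrec⟩ := h.recA s
  have hPeven : EqOn (fun w => P (-w)) P (ball 0 R) := by
    refine eqOn_ball_of_deriv_eq hPan.comp_neg_ball hPan (fun w hw _ => ?_) (by simp)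
    rw [deriv_comp_neg, hP' _ (neg_mem_ball_zero_of_mem hw), hP' w hw, hfe w hw, hB w hw]
    ring
  intro z hz
  rcases eq_or_ne z 0 with rfl | hz0
  · rw [neg_zero]
  have hA := hrec (-z) (neg_mem_ball_zero_of_mem hz) (neg_ne_zero.mpr hz0)
  rw [hB z hz, deriv_neg_of_odd hB hz, show P (-z) = P z from hPeven hz, div_neg] at hA
  linear_combination (hA - hrec z hz hz0) / 2

theorem parity (hfe : ∀ z ∈ ball (0 : ℂ) R, f (-z) = f z)
    (h : OlverSolution (ball 0 R) f ν A B) (s : ℕ) :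
    (∀ z ∈ ball (0 : ℂ) R, A s (-z) = A s z) ∧ ∀ z ∈ ball (0 : ℂ) R, B s (-z) = -B s z := by
  have hA : ∀ z ∈ ball (0 : ℂ) R, A s (-z) = A s z := by
    cases s with
    | zero => simp [h.A_zero]
    | succ k => exact h.even_A_succ_of_odd_B hfe (h.parity hfe k).2
  exact ⟨hA, h.odd_B_of_even_A hfe hA⟩

theorem eqOn_B_of_eqOn_A (h : OlverSolution (ball 0 R) f ν A B)
    (h' : OlverSolution (ball 0 R) f ν A' B') {s : ℕ} (hA : EqOn (A s) (A' s) (ball 0 R)) :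
    EqOn (B s) (B' s) (ball 0 R) := by
  intro z hz
  have hloc : ∀ w ∈ ball (0 : ℂ) R, A s =ᶠ[𝓝 w] A' s := fun w hw =>
    eventuallyEq_of_mem (isOpen_ball.mem_nhds hw) hA
  refine eqOn_ball_of_deriv_eq (h.analB s) (h'.analB s) (fun w hw hw0 => ?_) ?_ hz
  · have hB' := h.recB s w hw hw0
    rw [(hloc w hw).deriv_eq, (hloc w hw).deriv.deriv_eq, hA hw] at hB'
    linear_combination (hB' - h'.recB s w hw hw0) / 2
  · have hB0 := h.recB₀ s
    rw [(hloc 0 (mem_ball_self (pos_of_mem_ball hz))).deriv_eq] at hB0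
    linear_combination (hB0 - h'.recB₀ s) / 2

theorem eqOn_A_succ_of_eqOn_B (h : OlverSolution (ball 0 R) f ν A B)
    (h' : OlverSolution (ball 0 R) f ν A' B') {s : ℕ} (hB : EqOn (B s) (B' s) (ball 0 R))
    (h0 : A (s + 1) 0 = A' (s + 1) 0) : EqOn (A (s + 1)) (A' (s + 1)) (ball 0 R) := by
  intro z hz
  obtain ⟨P, hPan, hP', hrec⟩ := h.recA s
  obtain ⟨Q, hQan, hQ', hrec'⟩ := h'.recA s
  have hPQ : EqOn P (fun w => Q w + (P 0 - Q 0)) (ball 0 R) :=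
    eqOn_ball_of_deriv_eq hPan (hQan.add analyticOnNhd_const)
      (fun w hw _ => by rw [deriv_add_const, hP' w hw, hQ' w hw, hB hw]) (by ring)
  have hA : EqOn (A (s + 1)) (fun w => A' (s + 1) w + (P 0 - Q 0) / 2) (ball 0 R) := by
    refine eqOn_ball_of_forall_ne_zero (h.analA _) ((h'.analA _).add analyticOnNhd_const)
      fun w hw hw0 => ?_
    have hA' := hrec w hw hw0
    rw [hB hw, (eventuallyEq_of_mem (isOpen_ball.mem_nhds hw) hB).deriv_eq,
      show P w = Q w + (P 0 - Q 0) from hPQ hw] at hA'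
    linear_combination (hA' - hrec' w hw hw0) / 2
  have hc : P 0 - Q 0 = 0 := by
    have hA0 : A (s + 1) 0 = A' (s + 1) 0 + (P 0 - Q 0) / 2 :=
      hA (mem_ball_self (pos_of_mem_ball hz))
    rw [h0] at hA0
    linear_combination -2 * hA0
  rw [show A (s + 1) z = A' (s + 1) z + (P 0 - Q 0) / 2 from hA hz, hc]
  ring

theorem eqOn_of_A_apply_zero_eq (h : OlverSolution (ball 0 R) f ν A B)
    (h' : OlverSolution (ball 0 R) f ν A' B') (hA0 : ∀ s, A s 0 = A' s 0) (s : ℕ) :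
    EqOn (A s) (A' s) (ball 0 R) ∧ EqOn (B s) (B' s) (ball 0 R) := by
  have hA : EqOn (A s) (A' s) (ball 0 R) := by
    cases s with
    | zero => exact fun z _ => by rw [h.A_zero, h'.A_zero]
    | succ k => exact h.eqOn_A_succ_of_eqOn_B h' (h.eqOn_of_A_apply_zero_eq h' hA0 k).2 (hA0 _)
  exact ⟨hA, h.eqOn_B_of_eqOn_A h' hA⟩

end OlverSolution

namespace Olver

/-- `B_{s-1}(z)/z`, continued analytically to `z = 0`; it is `0` for `s = 0`. -/
noncomputable def gaugeTerm (B : ℕ → ℂ → ℂ) : ℕ → ℂ → ℂ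
  | 0 => 0
  | k + 1 => dslope (B k) 0

noncomputable def cauchyProduct (c : ℕ → ℂ) (F : ℕ → ℂ → ℂ) (s : ℕ) (z : ℂ) : ℂ :=
  ∑ p ∈ antidiagonal s, c p.1 * F p.2 z

/-- The coefficients of `F(u,μ)` in powers of `u⁻²`, where `β r` stands for `B_r'(μ,0)`. -/
def fCoeff (μ : ℂ) (β : ℕ → ℂ) : ℕ → ℂ
  | 0 => 1
  | j + 1 => -(2 * μ) * β j

section CauchyProduct

variable {D : Set ℂ} {c : ℕ → ℂ} {F : ℕ → ℂ → ℂ}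

theorem analyticOnNhd_cauchyProduct (hF : ∀ j, AnalyticOnNhd ℂ (F j) D) (s : ℕ) :
    AnalyticOnNhd ℂ (cauchyProduct c F s) D :=
  Finset.analyticOnNhd_fun_sum _ fun p _ => analyticOnNhd_const.mul (hF p.2)

theorem deriv_cauchyProduct {s : ℕ} {z : ℂ} (hF : ∀ j, DifferentiableAt ℂ (F j) z) :
    deriv (cauchyProduct c F s) z = cauchyProduct c (fun j => deriv (F j)) s z := by
  unfold cauchyProduct
  rw [deriv_fun_sum fun p _ => (hF p.2).const_mul _]
  exact sum_congr rfl fun p _ => deriv_const_mul _ (hF p.2)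

theorem deriv_deriv_cauchyProduct (hD : IsOpen D) (hF : ∀ j, AnalyticOnNhd ℂ (F j) D) {s : ℕ}
    {z : ℂ} (hz : z ∈ D) :
    deriv (deriv (cauchyProduct c F s)) z =
      cauchyProduct c (fun j => deriv (deriv (F j))) s z := by
  have hloc : deriv (cauchyProduct c F s) =ᶠ[𝓝 z] cauchyProduct c (fun j => deriv (F j)) s :=
    eventually_of_mem (hD.mem_nhds hz) fun w hw =>
      deriv_cauchyProduct fun j => (hF j w hw).differentiableAt
  rw [hloc.deriv_eq]
  exact deriv_cauchyProduct fun j => ((hF j).deriv z hz).differentiableAt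

theorem cauchyProduct_apply_zero (h0 : F 0 0 = 1) (hsucc : ∀ j, F (j + 1) 0 = 0) (s : ℕ) :
    cauchyProduct c F s 0 = c s := by
  cases s with
  | zero => simp [cauchyProduct, h0]
  | succ k => simp [cauchyProduct, Nat.sum_antidiagonal_succ', h0, hsucc]

end CauchyProduct

theorem sum_antidiagonal_fCoeff_mul (μ : ℂ) (β b : ℕ → ℂ) (s : ℕ) :
    ∑ p ∈ antidiagonal s, fCoeff μ β p.1 * b p.2 =
      b s - 2 * μ * ∑ r ∈ range s, β r * b (s - 1 - r) := by
  cases s with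
  | zero => simp [fCoeff]
  | succ k =>
    rw [Nat.sum_antidiagonal_succ, Nat.sum_antidiagonal_eq_sum_range_succ_mk, mul_sum,
      sub_eq_add_neg, ← sum_neg_distrib]
    simp only [fCoeff, Nat.add_sub_cancel, Nat.succ_eq_add_one]
    ring_nf

end Olver

namespace OlverSolution

variable {f : ℂ → ℂ} {ν : ℂ} {A B : ℕ → ℂ → ℂ}

theorem cauchyProduct {D : Set ℂ} (hD : IsOpen D) (h0 : (0 : ℂ) ∈ D)
    (h : OlverSolution D f ν A B) {c : ℕ → ℂ} (hc : c 0 = 1) :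
    OlverSolution D f ν (Olver.cauchyProduct c A) (Olver.cauchyProduct c B) := by
  have hdA : ∀ j, ∀ z ∈ D, DifferentiableAt ℂ (A j) z := fun j z hz =>
    (h.analA j z hz).differentiableAt
  have hdB : ∀ j, ∀ z ∈ D, DifferentiableAt ℂ (B j) z := fun j z hz =>
    (h.analB j z hz).differentiableAt
  choose P hPan hP' hrec using h.recA
  refine ⟨Olver.analyticOnNhd_cauchyProduct h.analA, Olver.analyticOnNhd_cauchyProduct h.analB,
    fun z => by simp [Olver.cauchyProduct, hc, h.A_zero], fun s z hz hz0 => ?_, fun s => ?_,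
    fun s => ⟨fun z => ∑ p ∈ antidiagonal s, c p.1 * P p.2 z + 2 * c (s + 1), ?_, ?_, ?_⟩⟩
  · rw [Olver.deriv_cauchyProduct fun j => hdB j z hz, Olver.deriv_cauchyProduct
      fun j => hdA j z hz, Olver.deriv_deriv_cauchyProduct hD h.analA hz]
    simp only [Olver.cauchyProduct, mul_sum, ← sum_neg_distrib, ← sum_add_distrib,
      ← sum_sub_distrib]
    exact sum_congr rfl fun p _ => by linear_combination c p.1 * h.recB p.2 z hz hz0
  · rw [Olver.deriv_cauchyProduct fun j => hdA j 0 h0]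
    simp only [Olver.cauchyProduct, mul_sum, ← sum_neg_distrib]
    exact sum_congr rfl fun p _ => by linear_combination c p.1 * h.recB₀ p.2
  · exact (Finset.analyticOnNhd_fun_sum _ fun p _ => analyticOnNhd_const.mul (hPan p.2)).add
      analyticOnNhd_const
  · intro z hz
    rw [deriv_add_const, deriv_fun_sum fun p _ => ((hPan p.2 z hz).differentiableAt).const_mul _]
    simp only [Olver.cauchyProduct, mul_sum]
    refine sum_congr rfl fun p _ => ?_
    rw [deriv_const_mul _ (hPan p.2 z hz).differentiableAt, hP' p.2 z hz]
    ring
  · intro z hz hz0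
    rw [Olver.deriv_cauchyProduct fun j => hdB j z hz]
    simp only [Olver.cauchyProduct, Nat.sum_antidiagonal_succ', h.A_zero, mul_add, mul_sum]
    have hterm : ∑ p ∈ antidiagonal s, 2 * (c p.1 * A (p.2 + 1) z) =
        ∑ p ∈ antidiagonal s, ((2 * ν + 1) / z * (c p.1 * B p.2 z) - c p.1 * deriv (B p.2) z +
          c p.1 * P p.2 z) :=
      sum_congr rfl fun p _ => by linear_combination c p.1 * hrec p.2 z hz hz0
    rw [hterm, sum_add_distrib, sum_sub_distrib]
    ring

end OlverSolution

namespace Olver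

variable {R : ℝ} {B : ℕ → ℂ → ℂ}

theorem analyticOnNhd_gaugeTerm (hR : 0 < R) (hB : ∀ k, AnalyticOnNhd ℂ (B k) (ball 0 R))
    (s : ℕ) : AnalyticOnNhd ℂ (gaugeTerm B s) (ball 0 R) := by
  cases s with
  | zero => exact analyticOnNhd_const
  | succ k =>
    exact ((Complex.differentiableOn_dslope (ball_mem_nhds 0 hR)).mpr
      (hB k).differentiableOn).analyticOnNhd isOpen_ball

theorem mul_gaugeTerm_succ {k : ℕ} (hB0 : B k 0 = 0) (z : ℂ) :
    z * gaugeTerm B (k + 1) z = B k z := by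
  simpa [gaugeTerm, hB0] using sub_smul_dslope (B k) 0 z

theorem gaugeTerm_neg (hB : ∀ k, ∀ z ∈ ball (0 : ℂ) R, B k (-z) = -B k z) (s : ℕ) :
    ∀ z ∈ ball (0 : ℂ) R, gaugeTerm B s (-z) = gaugeTerm B s z := by
  intro z hz
  cases s with
  | zero => rfl
  | succ k =>
    rcases eq_or_ne z 0 with rfl | hz0
    · rw [neg_zero]
    have hB0 : B k 0 = 0 := apply_zero_of_odd (pos_of_mem_ball hz) (hB k)
    have hneg := hB k z hz
    rw [← mul_gaugeTerm_succ hB0, ← mul_gaugeTerm_succ hB0] at hneg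
    exact mul_left_cancel₀ (neg_ne_zero.mpr hz0) (by linear_combination hneg)

/-- Both sides differ by `-2μ/z` times the derivative of `hrec` at `z`. -/
theorem gauge_identity {f A G P : ℂ → ℂ} {μ z : ℂ} (hz : z ≠ 0) (hA : AnalyticAt ℂ A z)
    (hG : AnalyticAt ℂ G z) (hP : HasDerivAt P (f z * (z * G z)) z)
    (hrec : ∀ᶠ w in 𝓝 z, 2 * A w = 2 * μ * G w - w * deriv G w + P w) :
    -deriv (deriv A) z + f z * A z - (2 * μ + 1) / z * deriv A z =
      -deriv (deriv fun w => A w - 2 * μ * G w) z + f z * (A z - 2 * μ * G z) -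
        (2 * (-μ) + 1) / z * deriv (fun w => A w - 2 * μ * G w) z := by
  have hA' : 2 * deriv A z =
      (2 * μ - 1) * deriv G z - z * deriv (deriv G) z + f z * (z * G z) := by
    have hd := ((hG.differentiableAt.hasDerivAt.const_mul (2 * μ)).fun_sub
      ((hasDerivAt_id' z).fun_mul hG.deriv.differentiableAt.hasDerivAt)).fun_add hP
    have hrec' : (fun w => 2 * A w) =ᶠ[𝓝 z] _ := hrec
    rw [← deriv_const_mul_field, hrec'.deriv_eq, hd.deriv]
    ring
  have hderiv : deriv (fun w => A w - 2 * μ * G w) =ᶠ[𝓝 z]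
      fun w => deriv A w - 2 * μ * deriv G w := by
    filter_upwards [hA.eventually_analyticAt, hG.eventually_analyticAt] with w hAw hGw
    rw [deriv_fun_sub hAw.differentiableAt (hGw.differentiableAt.const_mul _),
      deriv_const_mul_field]
  rw [hderiv.deriv_eq, hderiv.eq_of_nhds, deriv_fun_sub hA.deriv.differentiableAt
    (hG.deriv.differentiableAt.const_mul _), deriv_const_mul_field]
  field_simp
  linear_combination (-2 * μ) * hA'

end Olver

namespace OlverSolution

variable {R : ℝ} {f : ℂ → ℂ} {μ : ℂ} {A B : ℕ → ℂ → ℂ}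

theorem gauge (hR : 0 < R) (hfe : ∀ z ∈ ball (0 : ℂ) R, f (-z) = f z)
    (h : OlverSolution (ball 0 R) f μ A B) :
    OlverSolution (ball 0 R) f (-μ) (fun s z => A s z - 2 * μ * Olver.gaugeTerm B s z) B := by
  have hodd : ∀ k, ∀ z ∈ ball (0 : ℂ) R, B k (-z) = -B k z := fun k => (h.parity hfe k).2
  have hB0 : ∀ k, B k 0 = 0 := fun k => apply_zero_of_odd hR (hodd k)
  have hGan := Olver.analyticOnNhd_gaugeTerm hR h.analB
  have hBG : ∀ k, B k = fun z => z * Olver.gaugeTerm B (k + 1) z := fun k =>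
    funext fun z => (Olver.mul_gaugeTerm_succ (hB0 k) z).symm
  refine ⟨fun s => (h.analA s).sub (analyticOnNhd_const.mul (hGan s)), h.analB,
    fun z => by simp [Olver.gaugeTerm, h.A_zero], fun s z hz hz0 => ?_, fun s => ?_,
    fun s => ?_⟩
  · rw [h.recB s z hz hz0]
    cases s with
    | zero => simp [Olver.gaugeTerm, show A 0 = fun _ => 1 from funext h.A_zero]
    | succ k =>
      obtain ⟨P, hPan, hP', hrec⟩ := h.recA k
      refine Olver.gauge_identity (P := P) hz0 (h.analA _ z hz) (hGan _ z hz) ?_ ?_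
      · rw [Olver.mul_gaugeTerm_succ (hB0 k), ← hP' z hz]
        exact (hPan z hz).differentiableAt.hasDerivAt
      · filter_upwards [isOpen_ball.mem_nhds hz, eventually_ne_nhds hz0] with w hw hw0
        rw [hrec w hw hw0, hBG k]
        beta_reduce
        rw [deriv_fun_mul differentiableAt_fun_id (hGan _ w hw).differentiableAt, deriv_id'']
        field_simp
        ring
  · have heven : ∀ z ∈ ball (0 : ℂ) R,
        A s (-z) - 2 * μ * Olver.gaugeTerm B s (-z) = A s z - 2 * μ * Olver.gaugeTerm B s z :=
      fun z hz => by rw [(h.parity hfe s).1 z hz, Olver.gaugeTerm_neg hodd s z hz]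
    rw [hB0, deriv_zero_of_even hR heven]
    ring
  · obtain ⟨P, hPan, hP', hrec⟩ := h.recA s
    refine ⟨P, hPan, hP', fun z hz hz0 => ?_⟩
    have hGz : Olver.gaugeTerm B (s + 1) z = B s z / z := by
      rw [hBG s]
      field_simp
    rw [hGz]
    linear_combination hrec z hz hz0

end OlverSolution

theorem olver_F_reciprocal_general (R : ℝ) (hR : 0 < R) (f : ℂ → ℂ) (μ : ℂ)
    (hfe : ∀ z ∈ Metric.ball (0 : ℂ) R, f (-z) = f z)
    (Ap Bp Am Bm : ℕ → ℂ → ℂ)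
    (hABp : OlverSolution (Metric.ball 0 R) f μ Ap Bp)
    (hnormp : ∀ s, Ap (s + 1) 0 = 0)
    (hABm : OlverSolution (Metric.ball 0 R) f (-μ) Am Bm)
    (hnormm : ∀ s, Am (s + 1) 0 = 0) :
    ∀ s : ℕ, deriv (Bm s) 0 = deriv (Bp s) 0 +
      2 * μ * ∑ r ∈ Finset.range s, deriv (Bp r) 0 * deriv (Bm (s - 1 - r)) 0 := by
  intro s
  have h0 : (0 : ℂ) ∈ ball (0 : ℂ) R := mem_ball_self hR
  have hconv := hABm.cauchyProduct isOpen_ball h0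
    (c := Olver.fCoeff μ fun r => deriv (Bp r) 0) rfl
  have hvalues : ∀ n, Ap n 0 - 2 * μ * Olver.gaugeTerm Bp n 0 =
      Olver.cauchyProduct (Olver.fCoeff μ fun r => deriv (Bp r) 0) Am n 0 := by
    intro n
    rw [Olver.cauchyProduct_apply_zero (hABm.A_zero 0) hnormm]
    cases n with
    | zero => simp [Olver.gaugeTerm, Olver.fCoeff, hABp.A_zero]
    | succ k => simp [Olver.gaugeTerm, Olver.fCoeff, hnormp, dslope_same]
  have hB := ((hABp.gauge hR hfe).eqOn_of_A_apply_zero_eq hconv hvalues s).2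
  have hderiv := (eventuallyEq_of_mem (isOpen_ball.mem_nhds h0) hB).deriv_eq
  rw [Olver.deriv_cauchyProduct fun j => (hABm.analB j 0 h0).differentiableAt] at hderiv
  simp only [Olver.cauchyProduct] at hderiv
  rw [Olver.sum_antidiagonal_fCoeff_mul μ _ fun j => deriv (Bm j) 0] at hderiv
  linear_combination -hderiv

/-- The identity `F(u,μ)·F(u,-μ) = 1` for the formal power series
`F(u,μ) = 1 - 2μ ∑_{s≥0} B_s'(μ,0) u^{-(2s+2)}`, stated equivalently as the
convolution identity
`B_s'(-μ,0) = B_s'(μ,0) + 2μ ∑_{r=0}^{s-1} B_r'(μ,0) B'_{s-1-r}(-μ,0)`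
on the coefficients, where `B_s(±μ,·)` come from the normalized Olver
recursions with parameters `μ` and `-μ`. -/
theorem olver_F_reciprocal (R : ℝ) (hR : 0 < R) (f : ℂ → ℂ) (μ : ℂ)
    (hf : AnalyticOnNhd ℂ f (Metric.ball 0 R))
    (hfe : ∀ z ∈ Metric.ball (0 : ℂ) R, f (-z) = f z)
    (Ap Bp Am Bm : ℕ → ℂ → ℂ)
    (hABp : OlverSolution (Metric.ball 0 R) f μ Ap Bp)
    (hnormp : ∀ s, Ap (s + 1) 0 = 0)
    (hABm : OlverSolution (Metric.ball 0 R) f (-μ) Am Bm)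
    (hnormm : ∀ s, Am (s + 1) 0 = 0) :
    ∀ s : ℕ, deriv (Bm s) 0 = deriv (Bp s) 0 +
      2 * μ * ∑ r ∈ Finset.range s, deriv (Bp r) 0 * deriv (Bm (s - 1 - r)) 0 :=
  olver_F_reciprocal_general R hR f μ hfe Ap Bp Am Bm hABp hnormp hABm hnormm
end
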